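/- arXiv:1911.10770 — 6 statements merged into one kernel-verified Lean document; each statement's English description precedes it below -/
import Mathlib

section
/- Let f(z) = z + a₂z² + a₃z³ + ⋯ be analytic on the unit disk D and ω(z) = c₁z + c₂z² + c₃z³ + ⋯ a Schwarz function such that 2zf'(z)(1 − ω(z)) = (f(z) − f(−z))(1 + ω(z)) for all z ∈ D. Then the third Hankel determinant of f satisfies H₃(1) = (1/4)[ −(c₃ − c₁c₂)² + 2c₁²c₂² + 2c₂c₄ ]. -/
/-!
Writing `A` and `W` for the power series of `f` and `ω`, the functional equation says that
`2 X A' (1 - W) = (A(X) - A(-X)) (1 + W)` as formal power series: both sides converge absolutely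
on the disk, so they may be multiplied termwise, and a power series converging on the disk is
determined by its sum. Comparing the coefficients of `X², …, X⁵` expresses `a₂, …, a₅` as
polynomials in `c₁, …, c₄`, and substituting these into `H₃(1)` gives the formula.
-/

open Complex Metric PowerSeries

def HasPowerSeriesOnUnitDisk (F : ℂ → ℂ) (φ : ℂ⟦X⟧) : Prop :=
  ∀ z ∈ ball (0 : ℂ) 1, HasSum (fun n => coeff n φ * z ^ n) (F z)

namespace HasPowerSeriesOnUnitDisk

variable {F G : ℂ → ℂ} {φ ψ : ℂ⟦X⟧}

theorem congr (hF : HasPowerSeriesOnUnitDisk F φ) (h : Set.EqOn F G (ball 0 1)) :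
    HasPowerSeriesOnUnitDisk G φ :=
  fun z hz => h hz ▸ hF z hz

theorem one_le_radius (hF : HasPowerSeriesOnUnitDisk F φ) :
    1 ≤ (FormalMultilinearSeries.ofScalars ℂ (coeff · φ)).radius := by
  refine ENNReal.le_of_forall_nnreal_lt fun r hr => ?_
  have hr' : (r : ℂ) ∈ ball (0 : ℂ) 1 := by simpa using hr
  exact FormalMultilinearSeries.le_radius_of_tendsto _ (l := 0) <| by
    simpa using (hF r hr').summable.tendsto_atTop_zero.norm

theorem hasFPowerSeriesOnBall (hF : HasPowerSeriesOnUnitDisk F φ) :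
    HasFPowerSeriesOnBall F (FormalMultilinearSeries.ofScalars ℂ (coeff · φ)) 0 1 where
  r_le := hF.one_le_radius
  r_pos := one_pos
  hasSum {y} hy := by
    have hy' : y ∈ ball (0 : ℂ) 1 := by simpa [← ofReal_norm] using hy
    simpa [FormalMultilinearSeries.ofScalars_apply_eq, mul_comm] using hF y hy'

theorem summable_norm (hF : HasPowerSeriesOnUnitDisk F φ) {z : ℂ} (hz : z ∈ ball 0 1) :
    Summable fun n => ‖coeff n φ * z ^ n‖ := by
  have hz' : (‖z‖₊ : ENNReal) < 1 := by simpa [← NNReal.coe_lt_one] using hz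
  simpa using (FormalMultilinearSeries.ofScalars ℂ (coeff · φ)).summable_norm_mul_pow
    (hz'.trans_le hF.one_le_radius)

theorem unique (hφ : HasPowerSeriesOnUnitDisk F φ) (hψ : HasPowerSeriesOnUnitDisk F ψ) :
    φ = ψ := by
  have h := hφ.hasFPowerSeriesOnBall.hasFPowerSeriesAt.eq_formalMultilinearSeries
    hψ.hasFPowerSeriesOnBall.hasFPowerSeriesAt
  ext n
  exact congrFun (FormalMultilinearSeries.ofScalars_series_injective ℂ ℂ h) n

theorem add (hφ : HasPowerSeriesOnUnitDisk F φ) (hψ : HasPowerSeriesOnUnitDisk G ψ) :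
    HasPowerSeriesOnUnitDisk (fun z => F z + G z) (φ + ψ) :=
  fun z hz => by simpa [add_mul] using (hφ z hz).add (hψ z hz)

theorem sub (hφ : HasPowerSeriesOnUnitDisk F φ) (hψ : HasPowerSeriesOnUnitDisk G ψ) :
    HasPowerSeriesOnUnitDisk (fun z => F z - G z) (φ - ψ) :=
  fun z hz => by simpa [sub_mul] using (hφ z hz).sub (hψ z hz)

theorem mul (hφ : HasPowerSeriesOnUnitDisk F φ) (hψ : HasPowerSeriesOnUnitDisk G ψ) :
    HasPowerSeriesOnUnitDisk (fun z => F z * G z) (φ * ψ) := by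
  intro z hz
  have hsum := tsum_mul_tsum_eq_tsum_sum_antidiagonal_of_summable_norm
    (hφ.summable_norm hz) (hψ.summable_norm hz)
  rw [(hφ z hz).tsum_eq, (hψ z hz).tsum_eq] at hsum
  show HasSum _ (F z * G z)
  rw [hsum]
  refine (summable_norm_sum_mul_antidiagonal_of_summable_norm
    (hφ.summable_norm hz) (hψ.summable_norm hz)).of_norm.hasSum.congr_fun fun n => ?_
  rw [coeff_mul, Finset.sum_mul]
  refine Finset.sum_congr rfl fun kl hkl => ?_
  rw [← Finset.HasAntidiagonal.mem_antidiagonal.1 hkl, pow_add]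
  ring

theorem comp_neg (hF : HasPowerSeriesOnUnitDisk F φ) :
    HasPowerSeriesOnUnitDisk (fun z => F (-z)) (rescale (-1) φ) := fun z hz => by
  convert hF (-z) (by simpa using hz) using 2 with n
  rw [coeff_rescale, neg_pow]
  ring

theorem iteratedDeriv_eq_factorial_mul_coeff (hF : HasPowerSeriesOnUnitDisk F φ) (n : ℕ) :
    iteratedDeriv n F 0 = n.factorial * coeff n φ := by
  have hφ := hF.hasFPowerSeriesOnBall.hasFPowerSeriesAt
  have h := congrFun (FormalMultilinearSeries.ofScalars_series_injective ℂ ℂ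
    (hφ.eq_formalMultilinearSeries hφ.analyticAt.hasFPowerSeriesAt)) n
  have : (n.factorial : ℂ) ≠ 0 := Nat.cast_ne_zero.2 n.factorial_ne_zero
  rw [h]
  field_simp

protected theorem deriv (hF : HasPowerSeriesOnUnitDisk F φ) :
    HasPowerSeriesOnUnitDisk (_root_.deriv F) (d⁄dX ℂ φ) := by
  intro z hz
  have hdiff : DifferentiableOn ℂ (_root_.deriv F) (ball 0 1) := by
    simpa [← ENNReal.ofReal_one, Metric.eball_ofReal] using
      hF.hasFPowerSeriesOnBall.analyticOnNhd.deriv.differentiableOn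
  refine (Complex.hasSum_taylorSeries_on_ball hdiff hz).congr_fun fun n => ?_
  rw [coeff_derivative, ← iteratedDeriv_succ', hF.iteratedDeriv_eq_factorial_mul_coeff,
    Nat.factorial_succ]
  have : (n.factorial : ℂ) ≠ 0 := Nat.cast_ne_zero.2 n.factorial_ne_zero
  push_cast
  simp only [smul_eq_mul, sub_zero]
  field_simp

end HasPowerSeriesOnUnitDisk

theorem hasPowerSeriesOnUnitDisk_const (b : ℂ) :
    HasPowerSeriesOnUnitDisk (fun _ => b) (C b) := fun z _ => by
  convert hasSum_ite_eq 0 b using 2 with n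
  rw [coeff_C]
  split_ifs with h <;> simp [h]

theorem hasPowerSeriesOnUnitDisk_id : HasPowerSeriesOnUnitDisk (fun z => z) X := fun z _ => by
  convert hasSum_ite_eq 1 z using 2 with n
  rw [coeff_X]
  split_ifs with h <;> simp [h]

theorem coeff_of_starlike_symmetric_equation {A W : ℂ⟦X⟧}
    (hA : coeff 1 A = 1) (hW : coeff 0 W = 0)
    (h : C 2 * X * d⁄dX ℂ A * (C 1 - W) = (A - rescale (-1) A) * (C 1 + W)) :
    coeff 2 A = coeff 1 W ∧ coeff 3 A = coeff 2 W + coeff 1 W ^ 2 ∧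
      coeff 4 A = (coeff 3 W + 3 * coeff 1 W * coeff 2 W + 2 * coeff 1 W ^ 3) / 2 ∧
      coeff 5 A = (coeff 4 W + 2 * coeff 1 W * coeff 3 W + 2 * coeff 2 W ^ 2
        + 5 * coeff 1 W ^ 2 * coeff 2 W + 2 * coeff 1 W ^ 4) / 2 := by
  have e2 := congrArg (coeff 2) h
  have e3 := congrArg (coeff 3) h
  have e4 := congrArg (coeff 4) h
  have e5 := congrArg (coeff 5) h
  norm_num [coeff_mul, Finset.Nat.sum_antidiagonal_eq_sum_range_succ_mk, Finset.sum_range_succ,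
    coeff_X, coeff_C, coeff_derivative, hA, hW] at e2 e3 e4 e5
  have h2 : coeff 2 A = coeff 1 W := by linear_combination e2 / 4
  have h3 : coeff 3 A = coeff 2 W + coeff 1 W ^ 2 := by linear_combination e3 / 4 + coeff 1 W * h2
  refine ⟨h2, h3, ?_⟩
  have h4 : coeff 4 A = (coeff 3 W + 3 * coeff 1 W * coeff 2 W + 2 * coeff 1 W ^ 3) / 2 := by
    linear_combination e4 / 8 + (coeff 2 W / 2) * h2 + coeff 1 W * h3
  refine ⟨h4, ?_⟩
  linear_combination e5 / 8 + (coeff 3 W / 2) * h2 + coeff 2 W * h3 + coeff 1 W * h4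

theorem third_hankel_formula_starlike_symmetric_general
    (f : ℂ → ℂ) (a : ℕ → ℂ)
    (hfa : ∀ z ∈ ball (0 : ℂ) 1, HasSum (fun n => a n * z ^ n) (f z))
    (ha1 : a 1 = 1)
    (ω : ℂ → ℂ) (c : ℕ → ℂ)
    (hωc : ∀ z ∈ ball (0 : ℂ) 1, HasSum (fun n => c n * z ^ n) (ω z))
    (hc0 : c 0 = 0)
    (heq : ∀ z ∈ ball (0 : ℂ) 1,
      2 * z * deriv f z * (1 - ω z) = (f z - f (-z)) * (1 + ω z)) :
    a 3 * (a 2 * a 4 - a 3 ^ 2) - a 4 * (a 4 - a 2 * a 3) + a 5 * (a 3 - a 2 ^ 2)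
      = (1 / 4) * (-(c 3 - c 1 * c 2) ^ 2 + 2 * c 1 ^ 2 * c 2 ^ 2 + 2 * c 2 * c 4) := by
  have hA : HasPowerSeriesOnUnitDisk f (mk a) := fun z hz => by simpa using hfa z hz
  have hW : HasPowerSeriesOnUnitDisk ω (mk c) := fun z hz => by simpa using hωc z hz
  have hL := (((hasPowerSeriesOnUnitDisk_const 2).mul hasPowerSeriesOnUnitDisk_id).mul
    hA.deriv).mul ((hasPowerSeriesOnUnitDisk_const 1).sub hW)
  have hR := (hA.sub hA.comp_neg).mul ((hasPowerSeriesOnUnitDisk_const 1).add hW)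
  have hseries := (hL.congr heq).unique hR
  obtain ⟨h2, h3, h4, h5⟩ :=
    coeff_of_starlike_symmetric_equation (by simpa using ha1) (by simpa using hc0) hseries
  simp only [coeff_mk] at h2 h3 h4 h5
  rw [h2, h3, h4, h5]
  ring

theorem third_hankel_formula_starlike_symmetric
    (f : ℂ → ℂ) (a : ℕ → ℂ)
    (hf : DifferentiableOn ℂ f (ball (0 : ℂ) 1))
    (hfa : ∀ z ∈ ball (0 : ℂ) 1, HasSum (fun n => a n * z ^ n) (f z))
    (ha0 : a 0 = 0) (ha1 : a 1 = 1)
    (ω : ℂ → ℂ) (c : ℕ → ℂ)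
    (hω : DifferentiableOn ℂ ω (ball (0 : ℂ) 1))
    (hωc : ∀ z ∈ ball (0 : ℂ) 1, HasSum (fun n => c n * z ^ n) (ω z))
    (hc0 : c 0 = 0)
    (hωmap : ∀ z ∈ ball (0 : ℂ) 1, ω z ∈ ball (0 : ℂ) 1)
    (heq : ∀ z ∈ ball (0 : ℂ) 1,
      2 * z * deriv f z * (1 - ω z) = (f z - f (-z)) * (1 + ω z)) :
    a 3 * (a 2 * a 4 - a 3 ^ 2) - a 4 * (a 4 - a 2 * a 3) + a 5 * (a 3 - a 2 ^ 2)
      = (1 / 4) * (-(c 3 - c 1 * c 2) ^ 2 + 2 * c 1 ^ 2 * c 2 ^ 2 + 2 * c 2 * c 4) :=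
  third_hankel_formula_starlike_symmetric_general f a hfa ha1 ω c hωc hc0 heq
end

section
/- Let f(z) = z + a₂z² + a₃z³ + ⋯ be analytic on the unit disk D and ω(z) = c₁z + c₂z² + c₃z³ + ⋯ a Schwarz function such that zf'(z)/f(z) = ω(z) + √(1 + ω(z)²) for all z ∈ D (principal branch of the square root). Then the third Hankel determinant of f satisfies H₃(1) = −(1/9)(c₃ − (5/16)c₁c₂)² − (31/256)c₁²c₂² + (11/144)c₁³(c₃ + (5/11)c₁c₂ − (7/44)c₁³) + (1/8)(c₂ − (1/2)c₁²)c₄. -/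
/-!
Writing `q = z f'/f`, the functional equation says that `q = ω + √(1 + ω²)` is a root of
`t² - 2ωt - 1`, i.e. `(z f')² - f² - 2 (z f') f ω = 0` on the disk, with no branch of the square
root left. This is an identity between convergent power series, so by the identity theorem the
Cauchy-product coefficients of the left side vanish. Their orders 3 to 6 determine `a₂, …, a₅`
successively as polynomials in `c₁, …, c₄`, and substituting them into `H₃(1)` gives the formula.
-/

open Complex Metric Filter Finset FormalMultilinearSeries Set
open scoped NNReal ENNReal

namespace PowerSeries

theorem coeff_X_mul_derivative {R : Type*} [CommSemiring R] (p : R⟦X⟧) (n : ℕ) :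
    coeff n (X * d⁄dX R p) = n * coeff n p := by
  cases n with
  | zero => simp
  | succ n => rw [coeff_succ_X_mul, coeff_derivative]; push_cast; ring

variable {𝕜 : Type*} [RCLike 𝕜] {r : ℝ≥0}

def HasSumOnBall (p : 𝕜⟦X⟧) (F : 𝕜 → 𝕜) (r : ℝ≥0) : Prop :=
  ∀ z ∈ ball (0 : 𝕜) r, HasSum (fun n => coeff n p * z ^ n) (F z)

namespace HasSumOnBall

variable {p q : 𝕜⟦X⟧} {F G : 𝕜 → 𝕜}

theorem hasFPowerSeriesOnBall (h : p.HasSumOnBall F r) (hr : 0 < r) :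
    HasFPowerSeriesOnBall F (ofScalars 𝕜 fun n => coeff n p) 0 r := by
  refine ⟨?_, by exact_mod_cast hr, fun {y} hy => ?_⟩
  · refine ENNReal.le_of_forall_nnreal_lt fun t ht => ?_
    have ht' : ((t : ℝ) : 𝕜) ∈ ball (0 : 𝕜) r := by
      simpa [RCLike.norm_ofReal] using (show (t : ℝ) < r by exact_mod_cast ht)
    refine le_radius_of_tendsto _ (tendsto_zero_iff_norm_tendsto_zero.mp
      (h _ ht').summable.tendsto_atTop_zero |>.congr fun n => ?_)
    simp
  · rw [eball_coe, mem_ball_zero_iff] at hy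
    simpa only [ofScalars_apply_eq, smul_eq_mul, zero_add] using h y (mem_ball_zero_iff.mpr hy)

theorem summable_norm (h : p.HasSumOnBall F r) {z : 𝕜} (hz : z ∈ ball (0 : 𝕜) r) :
    Summable fun n => ‖coeff n p * z ^ n‖ := by
  have hr : 0 < r := NNReal.coe_pos.mp (pos_of_mem_ball hz)
  have hrad : (‖z‖₊ : ℝ≥0∞) < (ofScalars 𝕜 fun n => coeff n p).radius := by
    refine lt_of_lt_of_le ?_ (h.hasFPowerSeriesOnBall hr).r_le
    rw [ENNReal.coe_lt_coe, ← NNReal.coe_lt_coe, coe_nnnorm]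
    exact mem_ball_zero_iff.mp hz
  refine ((ofScalars 𝕜 fun n => coeff n p).summable_norm_mul_pow hrad).congr fun n => ?_
  rw [ofScalars_norm (E := 𝕜), norm_mul, norm_pow, coe_nnnorm]

theorem mul (hp : p.HasSumOnBall F r) (hq : q.HasSumOnBall G r) :
    (p * q).HasSumOnBall (fun z => F z * G z) r := by
  intro z hz
  have hsum := summable_norm_sum_mul_antidiagonal_of_summable_norm (hp.summable_norm hz)
    (hq.summable_norm hz)
  have htsum := tsum_mul_tsum_eq_tsum_sum_antidiagonal_of_summable_norm (hp.summable_norm hz)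
    (hq.summable_norm hz)
  rw [(hp z hz).tsum_eq, (hq z hz).tsum_eq] at htsum
  refine htsum ▸ hsum.of_norm.hasSum |>.congr_fun fun n => ?_
  rw [coeff_mul, sum_mul]
  refine sum_congr rfl fun kl hkl => ?_
  rw [← mem_antidiagonal.mp hkl, pow_add]
  ring

theorem sub (hp : p.HasSumOnBall F r) (hq : q.HasSumOnBall G r) :
    (p - q).HasSumOnBall (fun z => F z - G z) r := fun z hz => by
  simpa only [map_sub, sub_mul] using (hp z hz).sub (hq z hz)

theorem smul (hp : p.HasSumOnBall F r) (k : 𝕜) : (k • p).HasSumOnBall (fun z => k * F z) r :=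
  fun z hz => by simpa only [coeff_smul, smul_eq_mul, mul_assoc] using (hp z hz).mul_left k

theorem eq_zero (hp : p.HasSumOnBall F r) (hr : 0 < r) (hF : EqOn F 0 (ball 0 r)) : p = 0 := by
  have h := (hp.hasFPowerSeriesOnBall hr).hasFPowerSeriesAt.eq_zero_of_eventually
    (eventuallyEq_of_mem (ball_mem_nhds 0 (by exact_mod_cast hr)) hF)
  ext n
  simpa using congrFun ((ofScalars_series_eq_zero (E := 𝕜)).mp h) n

theorem X_mul_derivative (hp : p.HasSumOnBall F r) :
    (X * d⁄dX 𝕜 p).HasSumOnBall (fun z => z * deriv F z) r := by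
  intro z hz
  have hr : 0 < r := NNReal.coe_pos.mp (pos_of_mem_ball hz)
  have h := (ContinuousLinearMap.apply 𝕜 𝕜 z).hasSum
    ((hp.hasFPowerSeriesOnBall hr).fderiv.hasSum (by rwa [eball_coe]))
  simp only [zero_add, ContinuousLinearMap.apply_apply, derivSeries_apply_diag,
    ofScalars_apply_eq] at h
  have hderiv : fderiv 𝕜 F z z = z * deriv F z := by simp
  have h' : HasSum (fun n => coeff (n + 1) (X * d⁄dX 𝕜 p) * z ^ (n + 1)) (fderiv 𝕜 F z z) := by
    refine h.congr_fun fun n => ?_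
    rw [coeff_X_mul_derivative, nsmul_eq_mul, smul_eq_mul, mul_assoc]
  rw [hderiv] at h'
  simpa using (hasSum_nat_add_iff (f := fun n => coeff n (X * d⁄dX 𝕜 p) * z ^ n) 1).mp h'

end HasSumOnBall

theorem coeff_two_to_five_of_X_mul_derivative_quadratic {K : Type*} [Field K] [CharZero K]
    {p q : K⟦X⟧} (hp0 : coeff 0 p = 0) (hp1 : coeff 1 p = 1) (hq0 : coeff 0 q = 0)
    (h : X * d⁄dX K p * (X * d⁄dX K p) - p * p - (2 : K) • (X * d⁄dX K p * p * q) = 0) :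
    coeff 2 p = coeff 1 q ∧ coeff 3 p = coeff 2 q / 2 + 3 / 4 * coeff 1 q ^ 2 ∧
      coeff 4 p = coeff 3 q / 3 + 5 / 6 * coeff 1 q * coeff 2 q + 5 / 12 * coeff 1 q ^ 3 ∧
      coeff 5 p = coeff 4 q / 4 + coeff 2 q ^ 2 / 4 + 7 / 12 * coeff 1 q * coeff 3 q
        + 17 / 24 * coeff 1 q ^ 2 * coeff 2 q + coeff 1 q ^ 4 / 6 := by
  have hP := coeff_X_mul_derivative p
  generalize X * d⁄dX K p = P at h hP
  have e3 := congrArg (coeff 3) h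
  have e4 := congrArg (coeff 4) h
  have e5 := congrArg (coeff 5) h
  have e6 := congrArg (coeff 6) h
  simp only [map_sub, coeff_smul, coeff_mul, Nat.sum_antidiagonal_eq_sum_range_succ_mk,
    sum_range_succ, sum_range_zero, hP, map_zero, smul_eq_mul] at e3 e4 e5 e6
  norm_num [hp0, hp1, hq0] at e3 e4 e5 e6
  have h2 : coeff 2 p = coeff 1 q := by linear_combination e3 / 2
  rw [h2] at e4 e5 e6
  have h3 : coeff 3 p = coeff 2 q / 2 + 3 / 4 * coeff 1 q ^ 2 := by linear_combination e4 / 4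
  rw [h3] at e5 e6
  have h4 : coeff 4 p = coeff 3 q / 3 + 5 / 6 * coeff 1 q * coeff 2 q
      + 5 / 12 * coeff 1 q ^ 3 := by
    linear_combination e5 / 6
  rw [h4] at e6
  exact ⟨h2, h3, h4, by linear_combination e6 / 8⟩

end PowerSeries

theorem mul_self_sub_mul_self_sub_two_mul_eq_zero_of_eq_mul_add_sqrt {u v w : ℂ}
    (h : u = v * (w + (1 + w ^ 2) ^ ((1 : ℂ) / 2))) : u * u - v * v - 2 * (u * v * w) = 0 := by
  have hsq : ((1 + w ^ 2) ^ ((1 : ℂ) / 2)) ^ 2 = 1 + w ^ 2 := by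
    rw [one_div, cpow_ofNat_inv_pow]
  rw [h]
  linear_combination v ^ 2 * hsq

open PowerSeries in
theorem third_hankel_formula_starlike_q_general
    (f : ℂ → ℂ) (a : ℕ → ℂ)
    (hfa : ∀ z ∈ ball (0 : ℂ) 1, HasSum (fun n => a n * z ^ n) (f z))
    (ha0 : a 0 = 0) (ha1 : a 1 = 1)
    (ω : ℂ → ℂ) (c : ℕ → ℂ)
    (hωc : ∀ z ∈ ball (0 : ℂ) 1, HasSum (fun n => c n * z ^ n) (ω z))
    (hc0 : c 0 = 0)
    (heq : ∀ z ∈ ball (0 : ℂ) 1,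
      z * deriv f z = f z * (ω z + (1 + ω z ^ 2) ^ ((1 : ℂ) / 2))) :
    a 3 * (a 2 * a 4 - a 3 ^ 2) - a 4 * (a 4 - a 2 * a 3) + a 5 * (a 3 - a 2 ^ 2)
      = -(1 / 9) * (c 3 - (5 / 16) * c 1 * c 2) ^ 2 - (31 / 256) * c 1 ^ 2 * c 2 ^ 2
        + (11 / 144) * c 1 ^ 3 * (c 3 + (5 / 11) * c 1 * c 2 - (7 / 44) * c 1 ^ 3)
        + (1 / 8) * (c 2 - (1 / 2) * c 1 ^ 2) * c 4 := by
  have hA : (mk a).HasSumOnBall f 1 := by simpa [HasSumOnBall] using hfa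
  have hC : (mk c).HasSumOnBall ω 1 := by simpa [HasSumOnBall] using hωc
  have hP := hA.X_mul_derivative
  have hquad := (((hP.mul hP).sub (hA.mul hA)).sub (((hP.mul hA).mul hC).smul 2)).eq_zero
    one_pos fun z hz => mul_self_sub_mul_self_sub_two_mul_eq_zero_of_eq_mul_add_sqrt
      (heq z (by simpa using hz))
  obtain ⟨h2, h3, h4, h5⟩ := coeff_two_to_five_of_X_mul_derivative_quadratic
    (by simpa using ha0) (by simpa using ha1) (by simpa using hc0) hquad
  simp only [coeff_mk] at h2 h3 h4 h5
  rw [h2, h3, h4, h5]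
  ring

theorem third_hankel_formula_starlike_q
    (f : ℂ → ℂ) (a : ℕ → ℂ)
    (hf : DifferentiableOn ℂ f (ball (0 : ℂ) 1))
    (hfa : ∀ z ∈ ball (0 : ℂ) 1, HasSum (fun n => a n * z ^ n) (f z))
    (ha0 : a 0 = 0) (ha1 : a 1 = 1)
    (ω : ℂ → ℂ) (c : ℕ → ℂ)
    (hω : DifferentiableOn ℂ ω (ball (0 : ℂ) 1))
    (hωc : ∀ z ∈ ball (0 : ℂ) 1, HasSum (fun n => c n * z ^ n) (ω z))
    (hc0 : c 0 = 0)
    (hωmap : ∀ z ∈ ball (0 : ℂ) 1, ω z ∈ ball (0 : ℂ) 1)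
    (heq : ∀ z ∈ ball (0 : ℂ) 1,
      z * deriv f z = f z * (ω z + (1 + ω z ^ 2) ^ ((1 : ℂ) / 2))) :
    a 3 * (a 2 * a 4 - a 3 ^ 2) - a 4 * (a 4 - a 2 * a 3) + a 5 * (a 3 - a 2 ^ 2)
      = -(1 / 9) * (c 3 - (5 / 16) * c 1 * c 2) ^ 2 - (31 / 256) * c 1 ^ 2 * c 2 ^ 2
        + (11 / 144) * c 1 ^ 3 * (c 3 + (5 / 11) * c 1 * c 2 - (7 / 44) * c 1 ^ 3)
        + (1 / 8) * (c 2 - (1 / 2) * c 1 ^ 2) * c 4 :=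
  third_hankel_formula_starlike_q_general f a hfa ha0 ha1 ω c hωc hc0 heq
end

section
/- (Carlson's lemma) Let ω(z) = c₁z + c₂z² + c₃z³ + c₄z⁴ + ⋯ be a Schwarz function on the unit disk D. Then |c₂| ≤ 1 − |c₁|², |c₃| ≤ 1 − |c₁|² − |c₂|²/(1 + |c₁|), and |c₄| ≤ 1 − |c₁|² − |c₂|². -/
/-!
Dividing out the zero at the origin, `b n = c (n + 1)` are the Taylor coefficients of a
holomorphic map `g` of the unit disc into its closure. Schur's algorithm writes
`(g - b 0) / (1 - conj (b 0) * g) = z * g₁` with `g₁` of the same kind, which expresses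
`b 1, b 2, b 3` through the first coefficients of `g₁` and of the next function `g₂` of the
algorithm, each time with the factor `1 - ‖b 0‖ ^ 2` or `1 - ‖g₁ 0‖ ^ 2`. The three bounds then
follow from the triangle inequality, the bound `‖b 1‖ ≤ 1 - ‖b 0‖ ^ 2` applied to `g₁` and `g₂`,
and for `b 3` one further algebraic inequality. If `‖b 0‖ = 1`, `g` is constant by the maximum
modulus principle.
-/

open Complex ComplexConjugate Finset Metric Set

def HasCoeffsOnUnitDisc (a : ℕ → ℂ) (f : ℂ → ℂ) : Prop :=
  ∀ z ∈ ball (0 : ℂ) 1, HasSum (fun n => a n * z ^ n) (f z)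

namespace HasCoeffsOnUnitDisc

variable {a b : ℕ → ℂ} {f g : ℂ → ℂ}

theorem apply_zero (h : HasCoeffsOnUnitDisc a f) : f 0 = a 0 := by
  simpa using (h 0 (mem_ball_self one_pos)).unique (hasSum_single 0 fun n hn => by simp [hn])

theorem hasFPowerSeriesOnBall (h : HasCoeffsOnUnitDisc a f) :
    HasFPowerSeriesOnBall f (FormalMultilinearSeries.ofScalars ℂ a) 0 1 where
  r_le := ENNReal.le_of_forall_nnreal_lt fun r hr => by
    refine FormalMultilinearSeries.le_radius_of_summable_norm _ ?_
    have hr' : ((r : ℝ) : ℂ) ∈ ball (0 : ℂ) 1 := by simpa using hr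
    simpa [FormalMultilinearSeries.ofScalars_norm] using (h _ hr').summable.norm
  r_pos := one_pos
  hasSum {z} hz := by
    rw [← ENNReal.coe_one, eball_coe, NNReal.coe_one] at hz
    simpa [FormalMultilinearSeries.ofScalars_apply_eq, mul_comm] using h z hz

theorem differentiableOn (h : HasCoeffsOnUnitDisc a f) : DifferentiableOn ℂ f (ball 0 1) := by
  simpa [← ENNReal.coe_one, eball_coe] using h.hasFPowerSeriesOnBall.differentiableOn

theorem unique (ha : HasCoeffsOnUnitDisc a f) (hb : HasCoeffsOnUnitDisc b f) : a = b :=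
  FormalMultilinearSeries.ofScalars_series_injective ℂ ℂ <|
    ha.hasFPowerSeriesOnBall.hasFPowerSeriesAt.eq_formalMultilinearSeries
      hb.hasFPowerSeriesOnBall.hasFPowerSeriesAt

theorem sub (ha : HasCoeffsOnUnitDisc a f) (hb : HasCoeffsOnUnitDisc b g) :
    HasCoeffsOnUnitDisc (fun n => a n - b n) (fun z => f z - g z) := fun z hz => by
  simpa only [sub_mul] using (ha z hz).sub (hb z hz)

theorem const_mul (h : HasCoeffsOnUnitDisc a f) (γ : ℂ) :
    HasCoeffsOnUnitDisc (fun n => γ * a n) (fun z => γ * f z) := fun z hz => by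
  simpa only [mul_assoc] using (h z hz).mul_left γ

theorem mul (ha : HasCoeffsOnUnitDisc a f) (hb : HasCoeffsOnUnitDisc b g) :
    HasCoeffsOnUnitDisc (fun n => ∑ k ∈ range (n + 1), a k * b (n - k)) (fun z => f z * g z) := by
  intro z hz
  have hsum := hasSum_sum_range_mul_of_summable_norm (ha z hz).summable.norm
    (hb z hz).summable.norm
  rw [(ha z hz).tsum_eq, (hb z hz).tsum_eq] at hsum
  refine hsum.congr_fun fun n => ?_
  rw [sum_mul]
  refine sum_congr rfl fun k hk => ?_
  rw [mul_mul_mul_comm, ← pow_add, Nat.add_sub_cancel' (mem_range_succ_iff.mp hk)]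

theorem coeff_succ_eq (hf : HasCoeffsOnUnitDisc a f) (hg : HasCoeffsOnUnitDisc b g)
    (h : ∀ z ∈ ball (0 : ℂ) 1, f z = a 0 + z * g z) (n : ℕ) : a (n + 1) = b n := by
  have hc : HasCoeffsOnUnitDisc (fun n => if n = 0 then a 0 else b (n - 1)) f := fun z hz => by
    refine (hasSum_nat_add_iff' 1).mp ?_
    simp only [Nat.add_one_ne_zero, if_false, Nat.add_sub_cancel, sum_range_one, if_true,
      pow_zero, mul_one, h z hz, add_sub_cancel_left]
    exact ((hg z hz).mul_left z).congr_fun fun n => by ring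
  simpa using congrFun (hf.unique hc) (n + 1)

end HasCoeffsOnUnitDisc

theorem exists_hasCoeffsOnUnitDisc {f : ℂ → ℂ} (hf : DifferentiableOn ℂ f (ball 0 1)) :
    ∃ a, HasCoeffsOnUnitDisc a f := ⟨fun n => (n.factorial : ℂ)⁻¹ * iteratedDeriv n f 0,
  fun z hz => by
    refine (hasSum_taylorSeries_on_ball hf hz).congr_fun fun n => ?_
    simp only [sub_zero, smul_eq_mul]
    ring⟩

theorem hasCoeffsOnUnitDisc_zero : HasCoeffsOnUnitDisc 0 0 := fun _ _ => by simp

theorem norm_sq_one_sub_conj_mul_sub_norm_sq_sub (γ w : ℂ) :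
    ‖1 - conj γ * w‖ ^ 2 - ‖w - γ‖ ^ 2 = (1 - ‖γ‖ ^ 2) * (1 - ‖w‖ ^ 2) := by
  simp only [Complex.sq_norm, normSq_apply, sub_re, sub_im, mul_re, mul_im, conj_re, conj_im,
    one_re, one_im]
  ring

theorem one_sub_conj_mul_ne_zero {γ w : ℂ} (hγ : ‖γ‖ < 1) (hw : ‖w‖ ≤ 1) :
    1 - conj γ * w ≠ 0 := by
  refine sub_ne_zero.mpr fun h => ?_
  have : ‖conj γ * w‖ < 1 := by
    rw [norm_mul, norm_conj]
    nlinarith [norm_nonneg γ, norm_nonneg w]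
  simp [← h] at this

theorem norm_sub_div_one_sub_conj_mul_le_one {γ w : ℂ} (hγ : ‖γ‖ < 1) (hw : ‖w‖ ≤ 1) :
    ‖(w - γ) / (1 - conj γ * w)‖ ≤ 1 := by
  rw [norm_div, div_le_one (norm_pos_iff.mpr (one_sub_conj_mul_ne_zero hγ hw))]
  refine (pow_le_pow_iff_left₀ (norm_nonneg _) (norm_nonneg _) two_ne_zero).mp ?_
  have hγ' : 0 ≤ 1 - ‖γ‖ ^ 2 := by nlinarith [norm_nonneg γ]
  have hw' : 0 ≤ 1 - ‖w‖ ^ 2 := by nlinarith [norm_nonneg w]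
  linarith [norm_sq_one_sub_conj_mul_sub_norm_sq_sub γ w, mul_nonneg hγ' hw']

def IsSchurCoeffs (a : ℕ → ℂ) : Prop :=
  ∃ f, HasCoeffsOnUnitDisc a f ∧ MapsTo f (ball 0 1) (closedBall 0 1)

theorem exists_hasCoeffsOnUnitDisc_eq_id_mul {F : ℂ → ℂ} (hF : DifferentiableOn ℂ F (ball 0 1))
    (hFmaps : MapsTo F (ball 0 1) (closedBall 0 1)) (hF0 : F 0 = 0) :
    ∃ d g, HasCoeffsOnUnitDisc d g ∧ MapsTo g (ball 0 1) (closedBall 0 1) ∧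
      ∀ z ∈ ball (0 : ℂ) 1, F z = z * g z := by
  obtain ⟨d, hd⟩ := exists_hasCoeffsOnUnitDisc
    ((differentiableOn_dslope (ball_mem_nhds 0 one_pos)).mpr hF)
  refine ⟨d, dslope F 0, hd, fun z hz => ?_, fun z _ => ?_⟩
  · simpa using norm_dslope_le_div_of_mapsTo_ball hF (by rwa [hF0]) hz
  · simpa [hF0] using (sub_smul_dslope F 0 z).symm

/-- The coefficient relation of Schur's algorithm: if `a` are the coefficients of `f`, then those
of `g` with `(f - a 0) / (1 - conj (a 0) * f) = z * g` satisfy it. -/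
def IsSchurTransform (a d : ℕ → ℂ) : Prop :=
  ∀ n, a (n + 1) + conj (a 0) * ∑ k ∈ range (n + 1), a k * d (n - k) = d n

namespace IsSchurCoeffs

variable {a : ℕ → ℂ}

theorem norm_coeff_zero_le_one (h : IsSchurCoeffs a) : ‖a 0‖ ≤ 1 := by
  obtain ⟨f, hf, hmaps⟩ := h
  simpa [hf.apply_zero] using hmaps (mem_ball_self one_pos)

theorem shift (h : IsSchurCoeffs a) (h0 : a 0 = 0) : IsSchurCoeffs (fun n => a (n + 1)) := by
  obtain ⟨f, hf, hmaps⟩ := h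
  obtain ⟨d, g, hd, hgmaps, hfg⟩ :=
    exists_hasCoeffsOnUnitDisc_eq_id_mul hf.differentiableOn hmaps (hf.apply_zero.trans h0)
  have hda : (fun n => a (n + 1)) = d :=
    funext <| hf.coeff_succ_eq hd fun z hz => by rw [hfg z hz, h0, zero_add]
  exact ⟨g, hda ▸ hd, hgmaps⟩

theorem coeff_succ_eq_zero_of_norm_eq_one (h : IsSchurCoeffs a) (h1 : ‖a 0‖ = 1) (n : ℕ) :
    a (n + 1) = 0 := by
  obtain ⟨f, hf, hmaps⟩ := h
  have hmax : IsMaxOn (norm ∘ f) (ball 0 1) 0 := fun z hz => by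
    simpa [hf.apply_zero, h1] using hmaps hz
  have hconst := eqOn_of_isPreconnected_of_isMaxOn_norm (convex_ball 0 1).isPreconnected
    isOpen_ball hf.differentiableOn (mem_ball_self one_pos) hmax
  exact hf.coeff_succ_eq hasCoeffsOnUnitDisc_zero
    (fun z hz => by simp [hconst hz, hf.apply_zero]) n

theorem exists_isSchurTransform_of_norm_lt_one (h : IsSchurCoeffs a) (h1 : ‖a 0‖ < 1) :
    ∃ d, IsSchurCoeffs d ∧ IsSchurTransform a d := by
  obtain ⟨f, hf, hmaps⟩ := h
  set γ := a 0
  have hfle : ∀ z ∈ ball (0 : ℂ) 1, ‖f z‖ ≤ 1 := fun z hz => by simpa using hmaps hz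
  have hden : ∀ z ∈ ball (0 : ℂ) 1, 1 - conj γ * f z ≠ 0 := fun z hz =>
    one_sub_conj_mul_ne_zero h1 (hfle z hz)
  set F := fun z => (f z - γ) / (1 - conj γ * f z)
  have hF : DifferentiableOn ℂ F (ball 0 1) := (hf.differentiableOn.sub_const γ).div
    ((differentiableOn_const 1).sub ((differentiableOn_const _).mul hf.differentiableOn)) hden
  have hFmaps : MapsTo F (ball 0 1) (closedBall 0 1) := fun z hz =>
    mem_closedBall_zero_iff.mpr (norm_sub_div_one_sub_conj_mul_le_one h1 (hfle z hz))
  have hF0 : F 0 = 0 := by simp [F, hf.apply_zero, γ]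
  obtain ⟨d, g, hd, hgmaps, hFg⟩ := exists_hasCoeffsOnUnitDisc_eq_id_mul hF hFmaps hF0
  refine ⟨d, ⟨g, hd, hgmaps⟩, fun n => ?_⟩
  have hG := hd.sub ((hf.mul hd).const_mul (conj γ))
  have hfG : ∀ z ∈ ball (0 : ℂ) 1, f z = γ + z * (g z - conj γ * (f z * g z)) := fun z hz => by
    linear_combination (div_eq_iff (hden z hz)).mp (hFg z hz)
  linear_combination hf.coeff_succ_eq hG hfG n

theorem exists_isSchurTransform (h : IsSchurCoeffs a) :
    ∃ d, IsSchurCoeffs d ∧ IsSchurTransform a d := by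
  rcases h.norm_coeff_zero_le_one.lt_or_eq with h1 | h1
  · exact h.exists_isSchurTransform_of_norm_lt_one h1
  · refine ⟨0, ⟨0, hasCoeffsOnUnitDisc_zero, fun z _ => by simp⟩, fun n => ?_⟩
    simp [h.coeff_succ_eq_zero_of_norm_eq_one h1]

end IsSchurCoeffs

theorem sq_sub_norm_sq_schur_cubic_eq (γ d e : ℂ) :
    ((1 - ‖d‖ ^ 2) * ‖e‖ ^ 2 + ‖γ‖ ^ 2 * ‖d‖ ^ 2) ^ 2
      - ‖((1 - ‖d‖ ^ 2 : ℝ) : ℂ) * (conj d * e ^ 2 + 2 * γ * d * e) - γ ^ 2 * d ^ 3‖ ^ 2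
      = (1 - ‖d‖ ^ 2) * ((1 - ‖d‖ ^ 2) * ‖e‖ ^ 2 - ‖γ‖ ^ 2 * ‖d‖ ^ 2
          - 2 * (conj γ * conj d ^ 2 * e).re) ^ 2 := by
  simp only [Complex.sq_norm]
  simp only [normSq_apply, sub_re, sub_im, add_re, add_im, mul_re, mul_im, conj_re, conj_im,
    ofReal_re, ofReal_im, pow_succ, pow_zero, one_mul, re_ofNat, im_ofNat]
  ring

theorem norm_schur_cubic_le (γ d e : ℂ) (hd : ‖d‖ ≤ 1) :
    ‖((1 - ‖d‖ ^ 2 : ℝ) : ℂ) * (conj d * e ^ 2 + 2 * γ * d * e) - γ ^ 2 * d ^ 3‖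
      ≤ (1 - ‖d‖ ^ 2) * ‖e‖ ^ 2 + ‖γ‖ ^ 2 * ‖d‖ ^ 2 := by
  have hσ : 0 ≤ 1 - ‖d‖ ^ 2 := by nlinarith [norm_nonneg d]
  refine (pow_le_pow_iff_left₀ (norm_nonneg _) (by positivity) two_ne_zero).mp ?_
  nlinarith [sq_sub_norm_sq_schur_cubic_eq γ d e, mul_nonneg hσ (sq_nonneg
    ((1 - ‖d‖ ^ 2) * ‖e‖ ^ 2 - ‖γ‖ ^ 2 * ‖d‖ ^ 2 - 2 * (conj γ * conj d ^ 2 * e).re))]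

namespace IsSchurTransform

variable {a d : ℕ → ℂ}

theorem coeff_one (h : IsSchurTransform a d) : a 1 = ((1 - ‖a 0‖ ^ 2 : ℝ) : ℂ) * d 0 := by
  have h0 := h 0
  simp only [zero_add, sum_range_one, Nat.sub_zero] at h0
  push_cast
  linear_combination h0 - d 0 * conj_mul' (a 0)

theorem coeff_two (h : IsSchurTransform a d) :
    a 2 = ((1 - ‖a 0‖ ^ 2 : ℝ) : ℂ) * (d 1 - conj (a 0) * d 0 ^ 2) := by
  have h1 := h 1
  have ha1 := h.coeff_one
  simp only [Nat.reduceAdd, sum_range_succ, range_one, sum_singleton, tsub_zero, tsub_self] at h1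
  push_cast at ha1 ⊢
  linear_combination h1 - d 1 * conj_mul' (a 0) - conj (a 0) * d 0 * ha1

theorem coeff_three (h : IsSchurTransform a d) :
    a 3 = ((1 - ‖a 0‖ ^ 2 : ℝ) : ℂ) *
      (d 2 - 2 * conj (a 0) * d 0 * d 1 + conj (a 0) ^ 2 * d 0 ^ 3) := by
  have h2 := h 2
  have ha1 := h.coeff_one
  have ha2 := h.coeff_two
  simp only [Nat.reduceAdd, sum_range_succ, range_one, sum_singleton, tsub_zero, tsub_self,
    Nat.add_one_sub_one] at h2
  push_cast at ha1 ha2 ⊢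
  linear_combination h2 - d 2 * conj_mul' (a 0) - conj (a 0) * d 1 * ha1
    - conj (a 0) * d 0 * ha2

end IsSchurTransform

namespace IsSchurCoeffs

variable {a : ℕ → ℂ}

theorem one_sub_norm_sq_nonneg (h : IsSchurCoeffs a) : 0 ≤ 1 - ‖a 0‖ ^ 2 := by
  nlinarith [h.norm_coeff_zero_le_one, norm_nonneg (a 0)]

theorem norm_ofReal_one_sub_sq (h : IsSchurCoeffs a) :
    ‖((1 - ‖a 0‖ ^ 2 : ℝ) : ℂ)‖ = 1 - ‖a 0‖ ^ 2 := by
  rw [norm_real, Real.norm_of_nonneg h.one_sub_norm_sq_nonneg]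

theorem norm_coeff_one_le (h : IsSchurCoeffs a) : ‖a 1‖ ≤ 1 - ‖a 0‖ ^ 2 := by
  obtain ⟨d, hd, hT⟩ := h.exists_isSchurTransform
  rw [hT.coeff_one, norm_mul, h.norm_ofReal_one_sub_sq]
  exact mul_le_of_le_one_right h.one_sub_norm_sq_nonneg hd.norm_coeff_zero_le_one

theorem norm_coeff_two_le (h : IsSchurCoeffs a) :
    ‖a 2‖ ≤ 1 - ‖a 0‖ ^ 2 - ‖a 1‖ ^ 2 / (1 + ‖a 0‖) := by
  obtain ⟨d, hd, hT⟩ := h.exists_isSchurTransform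
  have hρ := h.one_sub_norm_sq_nonneg
  have hd1 := hd.norm_coeff_one_le
  have hinner : ‖d 1 - conj (a 0) * d 0 ^ 2‖ ≤ 1 - ‖d 0‖ ^ 2 + ‖a 0‖ * ‖d 0‖ ^ 2 := by
    calc ‖d 1 - conj (a 0) * d 0 ^ 2‖ ≤ ‖d 1‖ + ‖conj (a 0) * d 0 ^ 2‖ := norm_sub_le _ _
      _ = ‖d 1‖ + ‖a 0‖ * ‖d 0‖ ^ 2 := by rw [norm_mul, norm_conj, norm_pow]
      _ ≤ _ := by linarith
  have hrhs : 1 - ‖a 0‖ ^ 2 - ‖a 1‖ ^ 2 / (1 + ‖a 0‖)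
      = (1 - ‖a 0‖ ^ 2) * (1 - ‖d 0‖ ^ 2 + ‖a 0‖ * ‖d 0‖ ^ 2) := by
    rw [hT.coeff_one, norm_mul, h.norm_ofReal_one_sub_sq]
    field_simp
    ring
  rw [hrhs, hT.coeff_two, norm_mul, h.norm_ofReal_one_sub_sq]
  exact mul_le_mul_of_nonneg_left hinner hρ

theorem norm_coeff_three_le (h : IsSchurCoeffs a) :
    ‖a 3‖ ≤ 1 - ‖a 0‖ ^ 2 - ‖a 1‖ ^ 2 := by
  obtain ⟨d, hd, hT⟩ := h.exists_isSchurTransform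
  obtain ⟨e, he, hT'⟩ := hd.exists_isSchurTransform
  have hρ := h.one_sub_norm_sq_nonneg
  have hσ := hd.one_sub_norm_sq_nonneg
  have he1 := he.norm_coeff_one_le
  have hsplit : d 2 - 2 * conj (a 0) * d 0 * d 1 + conj (a 0) ^ 2 * d 0 ^ 3
      = ((1 - ‖d 0‖ ^ 2 : ℝ) : ℂ) * e 1 - (((1 - ‖d 0‖ ^ 2 : ℝ) : ℂ) *
          (conj (d 0) * e 0 ^ 2 + 2 * conj (a 0) * d 0 * e 0) - conj (a 0) ^ 2 * d 0 ^ 3) := by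
    rw [hT'.coeff_one, hT'.coeff_two]
    ring
  have hinner : ‖d 2 - 2 * conj (a 0) * d 0 * d 1 + conj (a 0) ^ 2 * d 0 ^ 3‖
      ≤ 1 - ‖d 0‖ ^ 2 + ‖a 0‖ ^ 2 * ‖d 0‖ ^ 2 := by
    rw [hsplit]
    refine (norm_sub_le _ _).trans ?_
    have hS := norm_schur_cubic_le (conj (a 0)) (d 0) (e 0) hd.norm_coeff_zero_le_one
    rw [norm_conj] at hS
    rw [norm_mul, hd.norm_ofReal_one_sub_sq]
    nlinarith [mul_le_mul_of_nonneg_left he1 hσ]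
  have hrhs : 1 - ‖a 0‖ ^ 2 - ‖a 1‖ ^ 2
      = (1 - ‖a 0‖ ^ 2) * (1 - ‖d 0‖ ^ 2 + ‖a 0‖ ^ 2 * ‖d 0‖ ^ 2) := by
    rw [hT.coeff_one, norm_mul, h.norm_ofReal_one_sub_sq]
    ring
  rw [hrhs, hT.coeff_three, norm_mul, h.norm_ofReal_one_sub_sq]
  exact mul_le_mul_of_nonneg_left hinner hρ

end IsSchurCoeffs

theorem carlson_schwarz_coeff_bounds_general
    (ω : ℂ → ℂ) (c : ℕ → ℂ)
    (hωc : ∀ z ∈ ball (0 : ℂ) 1, HasSum (fun n => c n * z ^ n) (ω z))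
    (hc0 : c 0 = 0)
    (hωmap : ∀ z ∈ ball (0 : ℂ) 1, ω z ∈ ball (0 : ℂ) 1) :
    ‖c 2‖ ≤ 1 - ‖c 1‖ ^ 2 ∧
    ‖c 3‖ ≤ 1 - ‖c 1‖ ^ 2
      - ‖c 2‖ ^ 2 / (1 + ‖c 1‖) ∧
    ‖c 4‖ ≤ 1 - ‖c 1‖ ^ 2 - ‖c 2‖ ^ 2 := by
  have hc : IsSchurCoeffs c := ⟨ω, hωc, fun z hz => ball_subset_closedBall (hωmap z hz)⟩
  have hb := hc.shift hc0
  exact ⟨hb.norm_coeff_one_le, hb.norm_coeff_two_le, hb.norm_coeff_three_le⟩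

/-- Carlson's lemma: coefficient estimates for a Schwarz function
`ω(z) = c₁z + c₂z² + c₃z³ + c₄z⁴ + ⋯`. -/
theorem carlson_schwarz_coeff_bounds
    (ω : ℂ → ℂ) (c : ℕ → ℂ)
    (hω : DifferentiableOn ℂ ω (ball (0 : ℂ) 1))
    (hωc : ∀ z ∈ ball (0 : ℂ) 1, HasSum (fun n => c n * z ^ n) (ω z))
    (hc0 : c 0 = 0)
    (hωmap : ∀ z ∈ ball (0 : ℂ) 1, ω z ∈ ball (0 : ℂ) 1) :
    ‖c 2‖ ≤ 1 - ‖c 1‖ ^ 2 ∧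
    ‖c 3‖ ≤ 1 - ‖c 1‖ ^ 2
      - ‖c 2‖ ^ 2 / (1 + ‖c 1‖) ∧
    ‖c 4‖ ≤ 1 - ‖c 1‖ ^ 2 - ‖c 2‖ ^ 2 :=
  carlson_schwarz_coeff_bounds_general ω c hωc hc0 hωmap
end

section
/- Let h(x,y) = −(9/8)x²y² − 9x²y + 9x² + 6x³ − 9x⁴ + 9y − 9y³ and Ω = {(x,y) ∈ ℝ² : 0 ≤ x ≤ 1, 0 ≤ y ≤ 1 − x²}. Then for all (x,y) ∈ Ω, h(x,y) ≤ max_{x ∈ [0,1]} (3/8)x²(21x⁴ − 66x² + 16x + 45), and this maximum is less than 6.004. -/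
/-- On `Ω = {(x,y) : 0 ≤ x ≤ 1, 0 ≤ y ≤ 1 − x²}` the function
`h(x,y) = −(9/8)x²y² − 9x²y + 9x² + 6x³ − 9x⁴ + 9y − 9y³` is bounded by the
maximum of `r(x) = (3/8)x²(21x⁴ − 66x² + 16x + 45)` over `[0,1]`, and this
maximum is less than `6.004`. -/
theorem h_bounded_by_max_of_r :
    (∀ x y : ℝ, 0 ≤ x → x ≤ 1 → 0 ≤ y → y ≤ 1 - x ^ 2 →
      -(9 / 8) * x ^ 2 * y ^ 2 - 9 * x ^ 2 * y + 9 * x ^ 2 + 6 * x ^ 3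
        - 9 * x ^ 4 + 9 * y - 9 * y ^ 3
      ≤ sSup ((fun x : ℝ => (3 / 8) * x ^ 2 * (21 * x ^ 4 - 66 * x ^ 2
          + 16 * x + 45)) '' Set.Icc 0 1)) ∧
    sSup ((fun x : ℝ => (3 / 8) * x ^ 2 * (21 * x ^ 4 - 66 * x ^ 2
        + 16 * x + 45)) '' Set.Icc 0 1) < 6.004 := by
  set r : ℝ → ℝ := fun x : ℝ => (3 / 8) * x ^ 2 * (21 * x ^ 4 - 66 * x ^ 2
      + 16 * x + 45) with hr
  -- bound on r over [0,1]
  have hrle : ∀ z ∈ r '' Set.Icc (0:ℝ) 1, z ≤ 6.0038 := by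
    rintro z ⟨x, ⟨h0, h1⟩, rfl⟩
    simp only [hr]
    nlinarith [sq_nonneg (x - 0.9484), sq_nonneg (x^2 - 0.8995), sq_nonneg (x-1), sq_nonneg x,
      mul_nonneg h0 (sq_nonneg (x - 0.9484)), mul_nonneg (sub_nonneg.2 h1) (sq_nonneg (x - 0.9484)),
      sq_nonneg (x*(x-0.9484))]
  have hbdd : BddAbove (r '' Set.Icc (0:ℝ) 1) := ⟨6.0038, fun z hz => hrle z hz⟩
  constructor
  · intro x y hx0 hx1 hy0 hy
    rcases le_or_gt (x^2) (8/11) with hc | hc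
    · -- h ≤ 6 = r 1 ≤ sSup
      have h6 : -(9 / 8) * x ^ 2 * y ^ 2 - 9 * x ^ 2 * y + 9 * x ^ 2 + 6 * x ^ 3
          - 9 * x ^ 4 + 9 * y - 9 * y ^ 3 ≤ 6 := by
        nlinarith [sq_nonneg (x - 0.85), sq_nonneg (y - 0.27), mul_nonneg hy0 (sub_nonneg.2 hy),
          sq_nonneg (1 - x^2 - y), mul_nonneg hx0 hy0, sq_nonneg x, sq_nonneg y,
          mul_nonneg (mul_nonneg hx0 hx0) hy0, sq_nonneg (x*y), sq_nonneg (x - y)]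
      have hmem : r 1 ∈ r '' Set.Icc (0:ℝ) 1 :=
        Set.mem_image_of_mem r (by constructor <;> norm_num)
      have : r 1 ≤ sSup (r '' Set.Icc (0:ℝ) 1) := le_csSup hbdd hmem
      have hr1 : r 1 = 6 := by simp [hr]; norm_num
      linarith
    · -- h ≤ r x ≤ sSup
      have hrx : -(9 / 8) * x ^ 2 * y ^ 2 - 9 * x ^ 2 * y + 9 * x ^ 2 + 6 * x ^ 3
          - 9 * x ^ 4 + 9 * y - 9 * y ^ 3 ≤ r x := by
        have hu : (0:ℝ) ≤ 1 - x^2 := le_trans hy0 hy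
        have ht : (0:ℝ) ≤ 1 - x^2 - y := by linarith
        have hA : (0:ℝ) ≤ (99/4) * x^2 - 18 := by nlinarith
        have hB : (0:ℝ) ≤ 18 - (135/8) * x^2 := by nlinarith
        simp only [hr]
        nlinarith [mul_nonneg (mul_nonneg hA hu) ht, mul_nonneg hB (sq_nonneg (1 - x^2 - y)),
          mul_nonneg (sq_nonneg (1 - x^2 - y)) hy0]
      have hmem : r x ∈ r '' Set.Icc (0:ℝ) 1 :=
        Set.mem_image_of_mem r ⟨hx0, hx1⟩
      have : r x ≤ sSup (r '' Set.Icc (0:ℝ) 1) := le_csSup hbdd hmem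
      linarith
  · have hsup : sSup (r '' Set.Icc (0:ℝ) 1) ≤ 6.0038 :=
      Real.sSup_le hrle (by norm_num)
    calc sSup (r '' Set.Icc (0:ℝ) 1) ≤ 6.0038 := hsup
      _ < 6.004 := by norm_num
end

section
/- For every z in the unit disk D = {z ∈ ℂ : |z| < 1}, the value z + √(1 + z²) has positive real part, where √ denotes the principal branch of the complex square root. In other words, the function z ↦ z + √(1+z²) maps the unit disk into the right half-plane. -/
/-!
Put `w = √(1 + z²)`. Since `‖z²‖ < 1`, the point `1 + z²` lies in the slit plane, so
`|arg w| < π/2` and `0 < Re w`. From `w² - z² = 1` we get `(z + w)⁻¹ = w - z`, hence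
`u = z + w` satisfies `u + u⁻¹ = 2w`. As `Re u⁻¹ = Re u / |u|²`, the real parts of `u` and `u⁻¹`
have the same sign, so `Re u > 0`.
-/

open Complex Metric

namespace Complex

lemma re_cpow_half_pos {a : ℂ} (ha : a ∈ slitPlane) : 0 < (a ^ ((1 : ℂ) / 2)).re := by
  rw [cpow_def_of_ne_zero (slitPlane_ne_zero ha), exp_re]
  have him : (log a * (1 / 2)).im = a.arg / 2 := by simp [log_im, div_eq_mul_inv]
  have harg_lt : a.arg < Real.pi := (arg_le_pi a).lt_of_ne (slitPlane_arg_ne_pi ha)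
  have hcos : 0 < Real.cos (a.arg / 2) :=
    Real.cos_pos_of_mem_Ioo ⟨by linarith [neg_pi_lt_arg a], by linarith⟩
  rw [him]
  positivity

lemma re_pos_of_re_add_inv_pos {u : ℂ} (h : 0 < (u + u⁻¹).re) : 0 < u.re := by
  rw [add_re, inv_re] at h
  by_contra! hu
  linarith [div_nonpos_of_nonpos_of_nonneg hu (normSq_nonneg u)]

end Complex

/-- For every `z` in the unit disk, `z + √(1 + z²)` (principal branch of the
square root) has positive real part. -/
theorem re_pos_of_q_function :
    ∀ z ∈ ball (0 : ℂ) 1, 0 < (z + (1 + z ^ 2) ^ ((1 : ℂ) / 2)).re := by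
  intro z hz
  have hw_sq : ((1 + z ^ 2) ^ ((1 : ℂ) / 2)) ^ 2 = 1 + z ^ 2 := by
    rw [one_div]
    exact cpow_ofNat_inv_pow _ 2
  set w := (1 + z ^ 2) ^ ((1 : ℂ) / 2)
  have hz_sq : ‖z ^ 2‖ < 1 := by
    rw [norm_pow]
    exact pow_lt_one₀ (norm_nonneg z) (mem_ball_zero_iff.mp hz) two_ne_zero
  have hw_re : 0 < w.re := re_cpow_half_pos (mem_slitPlane_of_norm_lt_one hz_sq)
  have hinv : (z + w)⁻¹ = w - z := inv_eq_of_mul_eq_one_right (by linear_combination hw_sq)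
  apply re_pos_of_re_add_inv_pos
  rw [hinv, add_re, sub_re, add_re]
  linarith
end

section
/- Every function in the class 𝒮*_q is starlike; that is, if f is analytic on the unit disk D with f(0)=0, f'(0)=1, and zf'(z)/f(z) ≺ z + √(1+z²) (principal branch), then zf'(z)/f(z) ≺ (1+z)/(1−z), i.e. Re(zf'(z)/f(z)) > 0 for all z ∈ D. -/
open Complex Metric

/-! For `‖w‖ < 1` the number `1 + w²` lies in the right half-plane, so its principal square
root `s` has `Re s > 0`; comparing real parts in `s² = 1 + w²` gives
`(Re s)² = 1 - (Im w)² + (Re w)² + (Im s)² > (Re w)²`, hence `Re (w + s) > 0`.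
So `p = ω + √(1 + ω²)` has positive real part on the disk, and its Cayley transform `(p - 1) / (p + 1)` is a
Schwarz function exhibiting `p ≺ (1 + z) / (1 - z)`. -/

namespace Complex

lemma re_cpow_one_half_pos {u : ℂ} (hu : u ∈ slitPlane) : 0 < (u ^ (1 / 2 : ℂ)).re := by
  rw [cpow_def_of_ne_zero (slitPlane_ne_zero hu), exp_re]
  refine mul_pos (Real.exp_pos _) (Real.cos_pos_of_mem_Ioo ?_)
  have him : (log u * (1 / 2)).im = u.arg / 2 := by simp [log_im, div_eq_mul_inv]
  have hlt : u.arg < Real.pi := lt_of_le_of_ne (arg_le_pi u) (slitPlane_arg_ne_pi hu)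
  rw [him]
  constructor <;> linarith [neg_pi_lt_arg u]

lemma cpow_one_half_sq (u : ℂ) : (u ^ (1 / 2 : ℂ)) ^ 2 = u := by
  simp [cpow_ofNat_inv_pow]

lemma sq_im_lt_one_of_norm_lt_one {w : ℂ} (hw : ‖w‖ < 1) : w.im ^ 2 < 1 := by
  have := abs_im_le_norm w
  nlinarith [abs_nonneg w.im, sq_abs w.im]

lemma re_one_add_sq_pos {w : ℂ} (hw : ‖w‖ < 1) : 0 < (1 + w ^ 2).re := by
  have := sq_im_lt_one_of_norm_lt_one hw
  simp only [add_re, one_re, sq, mul_re]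
  nlinarith [sq_nonneg w.re]

lemma re_add_cpow_one_half_one_add_sq_pos {w : ℂ} (hw : ‖w‖ < 1) :
    0 < (w + (1 + w ^ 2) ^ (1 / 2 : ℂ)).re := by
  set s := (1 + w ^ 2) ^ (1 / 2 : ℂ) with hs_def
  have hs : 0 < s.re := re_cpow_one_half_pos (Or.inl (re_one_add_sq_pos hw))
  have hsq : s.re ^ 2 - s.im ^ 2 = 1 + w.re ^ 2 - w.im ^ 2 := by
    have := congrArg re (cpow_one_half_sq (1 + w ^ 2))
    rw [← hs_def] at this
    simp only [sq, mul_re, add_re, one_re] at this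
    linarith
  have hlt : w.re ^ 2 < s.re ^ 2 := by
    nlinarith [sq_nonneg s.im, sq_im_lt_one_of_norm_lt_one hw]
  rw [add_re]
  linarith [(abs_lt_of_sq_lt_sq' hlt hs.le).1]

lemma add_one_ne_zero_of_re_pos {p : ℂ} (hp : 0 < p.re) : p + 1 ≠ 0 := by
  intro h
  have := congrArg re h
  simp only [add_re, one_re, zero_re] at this
  linarith

lemma norm_sub_one_div_add_one_lt_one {p : ℂ} (hp : 0 < p.re) :
    ‖(p - 1) / (p + 1)‖ < 1 := by
  rw [norm_div, div_lt_one (norm_pos_iff.2 (add_one_ne_zero_of_re_pos hp)),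
    ← sq_lt_sq₀ (norm_nonneg _) (norm_nonneg _), Complex.sq_norm, Complex.sq_norm, normSq_apply, normSq_apply]
  simp only [sub_re, sub_im, add_re, add_im, one_re, one_im]
  nlinarith

end Complex

theorem exists_schwarz_of_re_pos {p : ℂ → ℂ} (hp : DifferentiableOn ℂ p (ball 0 1))
    (hp0 : p 0 = 1) (hre : ∀ z ∈ ball (0 : ℂ) 1, 0 < (p z).re) :
    ∃ ω : ℂ → ℂ, DifferentiableOn ℂ ω (ball (0 : ℂ) 1) ∧ ω 0 = 0 ∧
      (∀ z ∈ ball (0 : ℂ) 1, ω z ∈ ball (0 : ℂ) 1) ∧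
      ∀ z ∈ ball (0 : ℂ) 1, p z * (1 - ω z) = 1 + ω z := by
  have hne : ∀ z ∈ ball (0 : ℂ) 1, p z + 1 ≠ 0 := fun z hz ↦ add_one_ne_zero_of_re_pos (hre z hz)
  refine ⟨fun z ↦ (p z - 1) / (p z + 1), ?_, by simp [hp0], ?_, ?_⟩
  · exact (hp.sub_const 1).div (hp.add_const 1) hne
  · intro z hz
    simpa using norm_sub_one_div_add_one_lt_one (hre z hz)
  · intro z hz
    field_simp [hne z hz]
    ring

theorem starlike_q_is_starlike_general
    (f : ℂ → ℂ)
    (hsub : ∃ ω : ℂ → ℂ, DifferentiableOn ℂ ω (ball (0 : ℂ) 1) ∧ ω 0 = 0 ∧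
      (∀ z ∈ ball (0 : ℂ) 1, ω z ∈ ball (0 : ℂ) 1) ∧
      ∀ z ∈ ball (0 : ℂ) 1,
        z * deriv f z = f z * (ω z + (1 + ω z ^ 2) ^ ((1 : ℂ) / 2))) :
    ∃ ω : ℂ → ℂ, DifferentiableOn ℂ ω (ball (0 : ℂ) 1) ∧ ω 0 = 0 ∧
      (∀ z ∈ ball (0 : ℂ) 1, ω z ∈ ball (0 : ℂ) 1) ∧
      ∀ z ∈ ball (0 : ℂ) 1,
        z * deriv f z * (1 - ω z) = f z * (1 + ω z) := by
  obtain ⟨ω, hωd, hω0, hωb, heq⟩ := hsub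
  have hωn : ∀ z ∈ ball (0 : ℂ) 1, ‖ω z‖ < 1 := fun z hz ↦ mem_ball_zero_iff.1 (hωb z hz)
  have hpd : DifferentiableOn ℂ (fun z ↦ ω z + (1 + ω z ^ 2) ^ ((1 : ℂ) / 2)) (ball 0 1) :=
    hωd.add (((hωd.pow 2).const_add 1).cpow_const
      fun z hz ↦ Or.inl (re_one_add_sq_pos (hωn z hz)))
  obtain ⟨φ, hφd, hφ0, hφb, hφ⟩ := exists_schwarz_of_re_pos hpd (by simp [hω0])
    fun z hz ↦ re_add_cpow_one_half_one_add_sq_pos (hωn z hz)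
  refine ⟨φ, hφd, hφ0, hφb, fun z hz ↦ ?_⟩
  rw [heq z hz, mul_assoc, hφ z hz]

/-- Every function in the class `𝒮*_q` is starlike: if `z f'(z)/f(z)` is
subordinate to `z + √(1+z²)` (principal branch, witnessed by a Schwarz
function), then `z f'(z)/f(z)` is subordinate to `(1+z)/(1−z)` (again
witnessed by a Schwarz function). -/
theorem starlike_q_is_starlike
    (f : ℂ → ℂ)
    (hf : DifferentiableOn ℂ f (ball (0 : ℂ) 1))
    (hf0 : f 0 = 0) (hf1 : deriv f 0 = 1)
    (hsub : ∃ ω : ℂ → ℂ, DifferentiableOn ℂ ω (ball (0 : ℂ) 1) ∧ ω 0 = 0 ∧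
      (∀ z ∈ ball (0 : ℂ) 1, ω z ∈ ball (0 : ℂ) 1) ∧
      ∀ z ∈ ball (0 : ℂ) 1,
        z * deriv f z = f z * (ω z + (1 + ω z ^ 2) ^ ((1 : ℂ) / 2))) :
    ∃ ω : ℂ → ℂ, DifferentiableOn ℂ ω (ball (0 : ℂ) 1) ∧ ω 0 = 0 ∧
      (∀ z ∈ ball (0 : ℂ) 1, ω z ∈ ball (0 : ℂ) 1) ∧
      ∀ z ∈ ball (0 : ℂ) 1,
        z * deriv f z * (1 - ω z) = f z * (1 + ω z) :=
  starlike_q_is_starlike_general f hsub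
end
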